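/- Let G be a group with finite generating set X, and suppose there are constants α ∈ ℤ_{≥0}, λ > 1 and D > C > 0 such that C·n^α·λ^n ≤ |S_{G,X}(n)| ≤ D·n^α·λ^n for all n ≥ 1. For g ∈ G let ℓ̃(g) = min{ |h|_X : h ∈ G, and there exists p ∈ G with g = p⁻¹hp and |g|_X = 2|p|_X + |h|_X } (the minimal length of a conjugate of g realised in a length-additive conjugation). Then for every ε > 0 there exists s ∈ ℤ_{≥0} such that for all sufficiently large n, the number of elements g ∈ B_{G,X}(n) with |g|_X − ℓ̃(g) > 2s is at most ε·|B_{G,X}(n)|. -/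

import Mathlib

/-- The word length of `g` with respect to a generating set `X`: the least `n` such that
`g` is a product of `n` elements of `X ∪ X⁻¹`. -/
noncomputable def wordLength {G : Type*} [Group G] (X : Set G) (g : G) : ℕ :=
  sInf {n | ∃ l : List G, l.length = n ∧ (∀ x ∈ l, x ∈ X ∨ x⁻¹ ∈ X) ∧ l.prod = g}

/-- The sphere of radius `n` in `G` with respect to `X`. -/
noncomputable def sphere {G : Type*} [Group G] (X : Set G) (n : ℕ) : Set G :=
  {g | wordLength X g = n}

/-- The ball of radius `n` in `G` with respect to `X`. -/
noncomputable def ball {G : Type*} [Group G] (X : Set G) (n : ℕ) : Set G :=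
  {g | wordLength X g ≤ n}

/-- The minimal word length of a conjugate of `g` realised in a length-additive
conjugation `g = p⁻¹ h p` with `|g| = 2|p| + |h|`. -/
noncomputable def conjLength {G : Type*} [Group G] (X : Set G) (g : G) : ℕ :=
  sInf {m | ∃ h p : G, g = p⁻¹ * h * p ∧
    wordLength X g = 2 * wordLength X p + wordLength X h ∧ wordLength X h = m}

/-!
Decompose a bad `g ∈ B(n)` as `g = p⁻¹ h p` with `|g| = 2|p| + |h|` and `|h| = ℓ̃(g)`. Then
`k := |p|` satisfies `s < k ≤ n/2`, `|h| ≤ n - 2k`, and the pair `(p, h)` determines `g`,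
so there are at most `∑_{s<k≤n/2} |S(k)| |B(n-2k)|` bad elements. The upper bound on spheres
gives `|B(m)| ≤ E (m+1)^α λ^m`, so each term is at most a constant times
`n^α λ^n · k^α λ^{-k}`, whereas `|B(n)| ≥ |S(n)| ≥ C n^α λ^n`. The series `∑ k^α λ^{-k}`
converges, so its tail beyond a large `s` is as small as we like.
-/

open Finset

section WordMetric

variable {G : Type*} [Group G] {X : Set G}

lemma wordLength_le_length {g : G} {l : List G} (hl : ∀ x ∈ l, x ∈ X ∨ x⁻¹ ∈ X)
    (hg : l.prod = g) : wordLength X g ≤ l.length :=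
  Nat.sInf_le ⟨l, rfl, hl, hg⟩

lemma wordLength_one : wordLength X (1 : G) = 0 :=
  Nat.le_zero.mp (wordLength_le_length (l := []) (by simp) rfl)

lemma exists_list_length_eq_wordLength (hX : Subgroup.closure X = ⊤) (g : G) :
    ∃ l : List G,
      l.length = wordLength X g ∧ (∀ x ∈ l, x ∈ X ∨ x⁻¹ ∈ X) ∧ l.prod = g := by
  have hg : g ∈ Submonoid.closure (X ∪ X⁻¹) := by
    rw [← Subgroup.closure_toSubmonoid, hX]
    exact Subgroup.mem_top g
  obtain ⟨l, hl, rfl⟩ := Submonoid.exists_list_of_mem_closure hg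
  exact Nat.sInf_mem (s := {n | ∃ l' : List G,
    l'.length = n ∧ (∀ x ∈ l', x ∈ X ∨ x⁻¹ ∈ X) ∧ l'.prod = l.prod})
    ⟨l.length, l, rfl, hl, rfl⟩

lemma sphere_zero (hX : Subgroup.closure X = ⊤) : sphere X 0 = {1} := by
  ext g
  refine ⟨fun hg => ?_, fun hg => (congrArg (wordLength X) hg).trans wordLength_one⟩
  obtain ⟨l, hlen, -, rfl⟩ := exists_list_length_eq_wordLength hX g
  rw [List.length_eq_zero_iff.mp (hlen.trans hg), List.prod_nil]
  rfl

lemma sphere_subset_ball (n : ℕ) : sphere X n ⊆ ball X n :=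
  fun _ hg => hg.le

lemma ball_eq_biUnion_sphere (n : ℕ) : ball X n = ⋃ k ∈ range (n + 1), sphere X k := by
  ext g
  simp [ball, sphere]

lemma card_ball_le_sum_card_sphere (n : ℕ) :
    Nat.card (ball X n) ≤ ∑ k ∈ range (n + 1), Nat.card (sphere X k) := by
  simpa only [Nat.card_coe_set_eq, ball_eq_biUnion_sphere] using
    Finset.set_ncard_biUnion_le _ _

lemma exists_conj_eq_conjLength (g : G) :
    ∃ h p : G, g = p⁻¹ * h * p ∧
      wordLength X g = 2 * wordLength X p + wordLength X h ∧ wordLength X h = conjLength X g :=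
  Nat.sInf_mem (s := {m | ∃ h p : G, g = p⁻¹ * h * p ∧
    wordLength X g = 2 * wordLength X p + wordLength X h ∧ wordLength X h = m})
    ⟨wordLength X g, g, 1, by simp, by simp [wordLength_one], rfl⟩

lemma card_two_mul_lt_wordLength_sub_conjLength_le {n : ℕ} (hfin : (ball X n).Finite)
    (s : ℕ) :
    Nat.card {g : G | g ∈ ball X n ∧ 2 * s < wordLength X g - conjLength X g} ≤
      ∑ k ∈ Icc (s + 1) (n / 2), Nat.card (sphere X k) * Nat.card (ball X (n - 2 * k)) := by
  choose h p hconj hlen hmin using fun g : G => exists_conj_eq_conjLength (X := X) g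
  set U := ⋃ k ∈ Icc (s + 1) (n / 2), sphere X k ×ˢ ball X (n - 2 * k)
  have hmaps : ∀ g ∈ {g : G | g ∈ ball X n ∧ 2 * s < wordLength X g - conjLength X g},
      (p g, h g) ∈ U := by
    rintro g ⟨hgn, hgs⟩
    have hgn : wordLength X g ≤ n := hgn
    have := hlen g
    have := hmin g
    refine Set.mem_biUnion (x := wordLength X (p g))
      (mem_coe.2 (mem_Icc.2 ⟨by omega, by omega⟩)) ⟨rfl, ?_⟩
    show wordLength X (h g) ≤ n - 2 * wordLength X (p g)
    omega
  have hinj : Set.InjOn (fun g => (p g, h g))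
      {g | g ∈ ball X n ∧ 2 * s < wordLength X g - conjLength X g} :=
    fun a _ b _ hab => by
      obtain ⟨hp, hh⟩ := Prod.mk.inj hab
      rw [hconj a, hconj b, hp, hh]
  have hU : U ⊆ ball X n ×ˢ ball X n := by
    intro x hx
    obtain ⟨k, hk, hx1, hx2⟩ := Set.mem_iUnion₂.1 hx
    have hk := mem_Icc.1 (mem_coe.1 hk)
    have hx1 : wordLength X x.1 = k := hx1
    have hx2 : wordLength X x.2 ≤ n - 2 * k := hx2
    exact ⟨show wordLength X x.1 ≤ n by omega, show wordLength X x.2 ≤ n by omega⟩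
  simp only [Nat.card_coe_set_eq]
  calc _ ≤ U.ncard := Set.ncard_le_ncard_of_injOn _ hmaps hinj ((hfin.prod hfin).subset hU)
    _ ≤ ∑ k ∈ Icc (s + 1) (n / 2), (sphere X k ×ˢ ball X (n - 2 * k)).ncard :=
      set_ncard_biUnion_le _ _
    _ = _ := by simp only [Set.ncard_prod]

end WordMetric

section Growth

variable {G : Type*} [Group G] {X : Set G} {α : ℕ} {lam D : ℝ}

lemma card_ball_le (hX : Subgroup.closure X = ⊤) (hlam : 1 < lam) (hD : 1 ≤ D)
    (hS : ∀ n : ℕ, 1 ≤ n → (Nat.card (sphere X n) : ℝ) ≤ D * n ^ α * lam ^ n)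
    (m : ℕ) :
    (Nat.card (ball X m) : ℝ) ≤ D * lam / (lam - 1) * (m + 1) ^ α * lam ^ m := by
  have hterm : ∀ k ∈ range (m + 1),
      (Nat.card (sphere X k) : ℝ) ≤ D * (m + 1) ^ α * lam ^ k := by
    intro k hk
    rcases Nat.eq_zero_or_pos k with rfl | hk0
    · rw [sphere_zero hX, Nat.card_unique, Nat.cast_one, pow_zero, mul_one]
      exact hD.trans (le_mul_of_one_le_right (by linarith) (one_le_pow₀ (by linarith)))
    · have hkm : (k : ℝ) ≤ m + 1 := by exact_mod_cast (mem_range.1 hk).le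
      calc _ ≤ D * k ^ α * lam ^ k := hS k hk0
        _ ≤ _ := by gcongr
  have hlam1 : 0 < lam - 1 := by linarith
  calc (Nat.card (ball X m) : ℝ) ≤ ∑ k ∈ range (m + 1), (Nat.card (sphere X k) : ℝ) := by
        exact_mod_cast card_ball_le_sum_card_sphere m
    _ ≤ ∑ k ∈ range (m + 1), D * (m + 1) ^ α * lam ^ k := sum_le_sum hterm
    _ = D * (m + 1) ^ α * ((lam ^ (m + 1) - 1) / (lam - 1)) := by
        rw [← mul_sum, geom_sum_eq hlam.ne']
    _ ≤ D * (m + 1) ^ α * (lam ^ (m + 1) / (lam - 1)) := by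
        gcongr
        linarith
    _ = _ := by field_simp; ring

lemma card_sphere_mul_card_ball_le (hX : Subgroup.closure X = ⊤) (hlam : 1 < lam) (hD : 1 ≤ D)
    (hS : ∀ n : ℕ, 1 ≤ n → (Nat.card (sphere X n) : ℝ) ≤ D * n ^ α * lam ^ n)
    {k n : ℕ} (hk : 1 ≤ k) (hkn : 2 * k ≤ n) :
    (Nat.card (sphere X k) : ℝ) * Nat.card (ball X (n - 2 * k)) ≤
      D * (D * lam / (lam - 1)) * n ^ α * lam ^ n * (k ^ α * lam⁻¹ ^ k) := by
  have hlam1 : 0 < lam - 1 := by linarith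
  have hpow : lam ^ k * lam ^ (n - 2 * k) = lam ^ n * lam⁻¹ ^ k := by
    rw [inv_pow, eq_mul_inv_iff_mul_eq₀ (by positivity), ← pow_add, ← pow_add]
    congr 1
    omega
  have hn : ((n - 2 * k : ℕ) : ℝ) + 1 ≤ n := by
    rw [Nat.cast_sub hkn]
    push_cast
    linarith [(by exact_mod_cast hk : (1 : ℝ) ≤ k)]
  calc (Nat.card (sphere X k) : ℝ) * Nat.card (ball X (n - 2 * k))
      ≤ (D * k ^ α * lam ^ k) * (D * lam / (lam - 1) * n ^ α * lam ^ (n - 2 * k)) := by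
        refine mul_le_mul (hS k hk) ((card_ball_le hX hlam hD hS _).trans ?_)
          (Nat.cast_nonneg _) ((Nat.cast_nonneg _).trans (hS k hk))
        have : 0 ≤ D * lam / (lam - 1) := by
          have : 0 < lam := by linarith
          positivity
        gcongr
    _ = D * (D * lam / (lam - 1)) * n ^ α * k ^ α * (lam ^ k * lam ^ (n - 2 * k)) := by
        ring
    _ = _ := by rw [hpow]; ring

end Growth

lemma Summable.exists_sum_Icc_lt {f : ℕ → ℝ} (hf : Summable f) {δ : ℝ} (hδ : 0 < δ) :
    ∃ s : ℕ, ∀ N, ∑ k ∈ Icc (s + 1) N, f k < δ := by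
  obtain ⟨t, ht⟩ := hf.vanishing (Iio_mem_nhds hδ)
  refine ⟨t.sup id, fun N => ht _ (disjoint_left.2 fun k hk hkt => ?_)⟩
  have := le_sup (f := id) hkt
  have := (mem_Icc.1 hk).1
  simp only [id] at *
  omega

theorem statement11_general {G : Type*} [Group G] (X : Set G)
    (hXgen : Subgroup.closure X = ⊤)
    (α : ℕ) (lam C D : ℝ) (hlam : 1 < lam) (hC : 0 < C)
    (hbd : ∀ n : ℕ, 1 ≤ n →
      C * (n : ℝ) ^ α * lam ^ n ≤ (Nat.card (sphere X n) : ℝ) ∧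
      (Nat.card (sphere X n) : ℝ) ≤ D * (n : ℝ) ^ α * lam ^ n) :
    ∀ ε : ℝ, 0 < ε → ∃ s : ℕ, ∀ᶠ n : ℕ in Filter.atTop,
      (Nat.card {g : G | g ∈ ball X n ∧ 2 * s < wordLength X g - conjLength X g} : ℝ) ≤
        ε * (Nat.card (ball X n) : ℝ) := by
  intro ε hε
  set D' := max 1 D
  set E := D' * lam / (lam - 1)
  have hD' : 1 ≤ D' := le_max_left _ _
  have hE : 0 < E := div_pos (by positivity) (by linarith)
  have hS n (hn : 1 ≤ n) : (Nat.card (sphere X n) : ℝ) ≤ D' * n ^ α * lam ^ n :=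
    (hbd n hn).2.trans (by gcongr; exact le_max_right _ _)
  -- `Nat.card` of an infinite set is `0`, so the lower bound makes the spheres finite.
  have hfin n : (ball X n).Finite := by
    rw [ball_eq_biUnion_sphere]
    refine (finite_toSet _).biUnion fun k _ => ?_
    rcases Nat.eq_zero_or_pos k with rfl | hk
    · simp [sphere_zero hXgen]
    · refine Set.finite_of_ncard_pos ?_
      rw [← Nat.card_coe_set_eq]
      exact_mod_cast (by positivity : 0 < C * (k : ℝ) ^ α * lam ^ k).trans_le (hbd k hk).1
  have hsum : Summable fun k : ℕ => (k : ℝ) ^ α * lam⁻¹ ^ k :=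
    summable_pow_mul_geometric_of_norm_lt_one α (by
      rw [norm_inv, Real.norm_of_nonneg (by linarith)]; exact inv_lt_one_of_one_lt₀ hlam)
  obtain ⟨s, hs⟩ := hsum.exists_sum_Icc_lt (δ := ε * C / (D' * E)) (by positivity)
  refine ⟨s, Filter.eventually_atTop.2 ⟨1, fun n hn => ?_⟩⟩
  calc (Nat.card {g : G | g ∈ ball X n ∧ 2 * s < wordLength X g - conjLength X g} : ℝ)
      ≤ ∑ k ∈ Icc (s + 1) (n / 2),
          (Nat.card (sphere X k) : ℝ) * Nat.card (ball X (n - 2 * k)) := by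
        exact_mod_cast card_two_mul_lt_wordLength_sub_conjLength_le (hfin n) s
    _ ≤ ∑ k ∈ Icc (s + 1) (n / 2), D' * E * n ^ α * lam ^ n * (k ^ α * lam⁻¹ ^ k) :=
        sum_le_sum fun k hk => card_sphere_mul_card_ball_le hXgen hlam hD' hS
          (by have := (mem_Icc.1 hk).1; omega) (by have := (mem_Icc.1 hk).2; omega)
    _ = D' * E * n ^ α * lam ^ n * ∑ k ∈ Icc (s + 1) (n / 2), k ^ α * lam⁻¹ ^ k := by
        rw [mul_sum]
    _ ≤ D' * E * n ^ α * lam ^ n * (ε * C / (D' * E)) := by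
        gcongr
        exact (hs _).le
    _ = ε * (C * n ^ α * lam ^ n) := by field_simp
    _ ≤ ε * Nat.card (ball X n) := by
        gcongr
        exact (hbd n hn).1.trans (by exact_mod_cast Nat.card_mono (hfin n) (sphere_subset_ball n))

theorem statement11 {G : Type*} [Group G] (X : Set G) (hXfin : X.Finite)
    (hXgen : Subgroup.closure X = ⊤)
    (α : ℕ) (lam C D : ℝ) (hlam : 1 < lam) (hC : 0 < C) (hCD : C < D)
    (hbd : ∀ n : ℕ, 1 ≤ n →
      C * (n : ℝ) ^ α * lam ^ n ≤ (Nat.card (sphere X n) : ℝ) ∧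
      (Nat.card (sphere X n) : ℝ) ≤ D * (n : ℝ) ^ α * lam ^ n) :
    ∀ ε : ℝ, 0 < ε → ∃ s : ℕ, ∀ᶠ n : ℕ in Filter.atTop,
      (Nat.card {g : G | g ∈ ball X n ∧ 2 * s < wordLength X g - conjLength X g} : ℝ) ≤
        ε * (Nat.card (ball X n) : ℝ) :=
  statement11_general X hXgen α lam C D hlam hC hbd
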